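/- arXiv:2403.01633 — 3 statements merged into one kernel-verified Lean document; each statement's English description precedes it below -/
import Mathlib

section
/- Let P and Q be probability measures on a measurable space, and let p and q denote their densities with respect to the measure μ = P + Q. Then ∫ (q/(p+q)) dP = (1/2)(1 − LC(P,Q)), and moreover (1/2)(1 − LC(P,Q)) ≤ (1/2)(1 − (1/2)H²(P,Q)) ≤ (1/2)√(1 − TV(P,Q)²). -/
open MeasureTheory Real

set_option maxHeartbeats 1600000 in
/-- For probability measures `P, Q` with densities `p, q` with respect to
`μ = P + Q`: `∫ (q/(p+q)) dP = (1/2)(1 − LC(P,Q))`, and moreover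
`(1/2)(1 − LC(P,Q)) ≤ (1/2)(1 − (1/2)H²(P,Q)) ≤ (1/2)√(1 − TV(P,Q)²)`, where
`TV(P,Q) = (1/2)∫|p − q| dμ`, `LC(P,Q) = (1/2)∫ (p − q)²/(p + q) dμ`, and
`H²(P,Q) = ∫ (√p − √q)² dμ`. -/
theorem ratio_inequality {α : Type*} [MeasurableSpace α]
    (P Q : Measure α) [IsProbabilityMeasure P] [IsProbabilityMeasure Q]
    (p q : α → ℝ)
    (hp : p = fun x => (P.rnDeriv (P + Q) x).toReal)
    (hq : q = fun x => (Q.rnDeriv (P + Q) x).toReal)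
    (TV LC H2 : ℝ)
    (hTV : TV = (1 / 2) * ∫ x, |p x - q x| ∂(P + Q))
    (hLC : LC = (1 / 2) * ∫ x, (p x - q x) ^ 2 / (p x + q x) ∂(P + Q))
    (hH2 : H2 = ∫ x, (Real.sqrt (p x) - Real.sqrt (q x)) ^ 2 ∂(P + Q)) :
    (∫ x, q x / (p x + q x) ∂P) = (1 / 2) * (1 - LC) ∧
    (1 / 2) * (1 - LC) ≤ (1 / 2) * (1 - (1 / 2) * H2) ∧
    (1 / 2) * (1 - (1 / 2) * H2) ≤ (1 / 2) * Real.sqrt (1 - TV ^ 2) := by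
  have hPμ : P ≪ P + Q := Measure.absolutelyContinuous_of_le (Measure.le_add_right le_rfl)
  have hp0 : ∀ x, 0 ≤ p x := by rw [hp]; intro x; exact ENNReal.toReal_nonneg
  have hq0 : ∀ x, 0 ≤ q x := by rw [hq]; intro x; exact ENNReal.toReal_nonneg
  have hmp : Measurable p := by rw [hp]; exact (Measure.measurable_rnDeriv P (P + Q)).ennreal_toReal
  have hmq : Measurable q := by rw [hq]; exact (Measure.measurable_rnDeriv Q (P + Q)).ennreal_toReal
  -- p + q = 1 a.e.
  have hpq1 : ∀ᵐ x ∂(P + Q), p x + q x = 1 := by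
    filter_upwards [Measure.rnDeriv_add' P Q (P + Q), Measure.rnDeriv_self (P + Q)] with x h1 h2
    have hx : P.rnDeriv (P + Q) x + Q.rnDeriv (P + Q) x = 1 := by
      rw [← Pi.add_apply, ← h1, h2]
    have ha : P.rnDeriv (P + Q) x ≠ ⊤ := by
      intro h; rw [h] at hx; simp at hx
    have hb : Q.rnDeriv (P + Q) x ≠ ⊤ := by
      intro h; rw [h] at hx; simp at hx
    rw [hp, hq]
    simp only
    rw [← ENNReal.toReal_add ha hb, hx, ENNReal.toReal_one]
  have hμuniv : ((P + Q) Set.univ).toReal = 2 := by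
    rw [Measure.add_apply, measure_univ, measure_univ,
      ENNReal.toReal_add ENNReal.one_ne_top ENNReal.one_ne_top, ENNReal.toReal_one]
    norm_num
  -- integrability of bounded measurable functions
  have hbdd : ∀ (f : α → ℝ) (C : ℝ), Measurable f → (∀ᵐ x ∂(P + Q), |f x| ≤ C) →
      Integrable f (P + Q) := fun f C hm hb =>
    (integrable_const C).mono' hm.aestronglyMeasurable (by simpa [Real.norm_eq_abs] using hb)
  have hple : ∀ᵐ x ∂(P + Q), p x ≤ 1 := by
    filter_upwards [hpq1] with x hx; nlinarith [hq0 x]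
  have hqle : ∀ᵐ x ∂(P + Q), q x ≤ 1 := by
    filter_upwards [hpq1] with x hx; nlinarith [hp0 x]
  have hIpq : Integrable (fun x => p x * q x) (P + Q) := by
    refine hbdd _ 1 (hmp.mul hmq) ?_
    filter_upwards [hple, hqle] with x h1 h2
    rw [abs_of_nonneg (mul_nonneg (hp0 x) (hq0 x))]
    nlinarith [hp0 x, hq0 x]
  have hIB : Integrable (fun x => Real.sqrt (p x) * Real.sqrt (q x)) (P + Q) := by
    refine hbdd _ 1 (hmp.sqrt.mul hmq.sqrt) ?_
    filter_upwards [hple, hqle] with x h1 h2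
    rw [abs_of_nonneg (mul_nonneg (Real.sqrt_nonneg _) (Real.sqrt_nonneg _))]
    calc Real.sqrt (p x) * Real.sqrt (q x) ≤ 1 * 1 := by
          apply mul_le_mul
          · exact Real.sqrt_le_one.mpr h1
          · exact Real.sqrt_le_one.mpr h2
          · exact Real.sqrt_nonneg _
          · norm_num
      _ = 1 := by norm_num
  set I : ℝ := ∫ x, p x * q x ∂(P + Q) with hI
  set B : ℝ := ∫ x, Real.sqrt (p x) * Real.sqrt (q x) ∂(P + Q) with hBdef
  -- value of the LC integral
  have hLCval : ∫ x, (p x - q x) ^ 2 / (p x + q x) ∂(P + Q) = 2 - 4 * I := by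
    have h1 : ∫ x, (p x - q x) ^ 2 / (p x + q x) ∂(P + Q)
        = ∫ x, (1 - 4 * (p x * q x)) ∂(P + Q) := by
      refine integral_congr_ae ?_
      filter_upwards [hpq1] with x hx
      rw [hx, div_one]; nlinarith [hx]
    rw [h1, integral_sub (integrable_const 1) (hIpq.const_mul 4), integral_const, measureReal_def, hμuniv,
      integral_const_mul]
    simp [hI]
  -- value of the H2 integral
  have hH2val : ∫ x, (Real.sqrt (p x) - Real.sqrt (q x)) ^ 2 ∂(P + Q) = 2 - 2 * B := by
    have h1 : ∫ x, (Real.sqrt (p x) - Real.sqrt (q x)) ^ 2 ∂(P + Q)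
        = ∫ x, (1 - 2 * (Real.sqrt (p x) * Real.sqrt (q x))) ∂(P + Q) := by
      refine integral_congr_ae ?_
      filter_upwards [hpq1] with x hx
      have hps : Real.sqrt (p x) ^ 2 = p x := Real.sq_sqrt (hp0 x)
      have hqs : Real.sqrt (q x) ^ 2 = q x := Real.sq_sqrt (hq0 x)
      nlinarith [hps, hqs]
    rw [h1, integral_sub (integrable_const 1) (hIB.const_mul 2), integral_const, measureReal_def, hμuniv,
      integral_const_mul]
    simp [hBdef]
  -- value of the (√p+√q)² integral
  have hplusval : ∫ x, (Real.sqrt (p x) + Real.sqrt (q x)) ^ 2 ∂(P + Q) = 2 + 2 * B := by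
    have h1 : ∫ x, (Real.sqrt (p x) + Real.sqrt (q x)) ^ 2 ∂(P + Q)
        = ∫ x, (1 + 2 * (Real.sqrt (p x) * Real.sqrt (q x))) ∂(P + Q) := by
      refine integral_congr_ae ?_
      filter_upwards [hpq1] with x hx
      have hps : Real.sqrt (p x) ^ 2 = p x := Real.sq_sqrt (hp0 x)
      have hqs : Real.sqrt (q x) ^ 2 = q x := Real.sq_sqrt (hq0 x)
      nlinarith [hps, hqs]
    rw [h1, integral_add (integrable_const 1) (hIB.const_mul 2), integral_const, measureReal_def, hμuniv,
      integral_const_mul]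
    simp [hBdef]
  have hB0 : 0 ≤ B := integral_nonneg fun x =>
    mul_nonneg (Real.sqrt_nonneg _) (Real.sqrt_nonneg _)
  have hB1 : B ≤ 1 := by
    have : ∫ x, Real.sqrt (p x) * Real.sqrt (q x) ∂(P + Q)
        ≤ ∫ _x, (1 / 2 : ℝ) ∂(P + Q) := by
      refine integral_mono_ae hIB (integrable_const _) ?_
      filter_upwards [hpq1] with x hx
      have hps : Real.sqrt (p x) ^ 2 = p x := Real.sq_sqrt (hp0 x)
      have hqs : Real.sqrt (q x) ^ 2 = q x := Real.sq_sqrt (hq0 x)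
      nlinarith [sq_nonneg (Real.sqrt (p x) - Real.sqrt (q x))]
    rw [integral_const, measureReal_def, hμuniv, smul_eq_mul] at this
    rw [hBdef]; linarith
  -- first claim
  have claim1 : (∫ x, q x / (p x + q x) ∂P) = I := by
    have h1 : (∫ x, q x / (p x + q x) ∂P) = ∫ x, q x ∂P := by
      refine integral_congr_ae ?_
      filter_upwards [hPμ.ae_le hpq1] with x hx
      rw [hx, div_one]
    have h2 : ∫ x, (P.rnDeriv (P + Q) x).toReal • q x ∂(P + Q) = ∫ x, q x ∂P :=
      MeasureTheory.integral_rnDeriv_smul hPμ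
    rw [h1, ← h2, hI]
    refine integral_congr_ae (Filter.Eventually.of_forall fun x => ?_)
    rw [hp]; simp [smul_eq_mul]
  refine ⟨?_, ?_, ?_⟩
  · rw [claim1, hLC, hLCval]; ring
  · rw [hLC, hLCval, hH2, hH2val]
    have h2IB : 2 * I ≤ B := by
      rw [hI, hBdef, ← integral_const_mul]
      refine integral_mono_ae (hIpq.const_mul 2) hIB ?_
      filter_upwards [hpq1] with x hx
      set t := Real.sqrt (p x) * Real.sqrt (q x) with ht
      have ht0 : 0 ≤ t := mul_nonneg (Real.sqrt_nonneg _) (Real.sqrt_nonneg _)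
      have ht2 : t ^ 2 = p x * q x := by
        rw [ht, mul_pow, Real.sq_sqrt (hp0 x), Real.sq_sqrt (hq0 x)]
      have h12 : 0 ≤ 1 - 2 * t := by nlinarith [sq_nonneg (p x - q x)]
      nlinarith [mul_nonneg ht0 h12]
    linarith
  · rw [hH2, hH2val, hTV]
    -- Cauchy–Schwarz
    have hfm : Measurable fun x => |Real.sqrt (p x) - Real.sqrt (q x)| :=
      (hmp.sqrt.sub hmq.sqrt).abs
    have hgm : Measurable fun x => Real.sqrt (p x) + Real.sqrt (q x) :=
      hmp.sqrt.add hmq.sqrt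
    have hmem : ∀ (f : α → ℝ) (C : ℝ), Measurable f → (∀ᵐ x ∂(P + Q), |f x| ≤ C) →
        MemLp f (ENNReal.ofReal 2) (P + Q) := fun f C hm hb =>
      (memLp_top_of_bound hm.aestronglyMeasurable C
        (by simpa [Real.norm_eq_abs] using hb)).mono_exponent le_top
    have hfb : ∀ᵐ x ∂(P + Q), |Real.sqrt (p x) - Real.sqrt (q x)| ≤ 1 := by
      filter_upwards [hple, hqle] with x h1 h2
      have := Real.sqrt_le_one.mpr h1
      have := Real.sqrt_le_one.mpr h2
      have := Real.sqrt_nonneg (p x)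
      have := Real.sqrt_nonneg (q x)
      rw [abs_le]; constructor <;> linarith
    have hgb : ∀ᵐ x ∂(P + Q), |Real.sqrt (p x) + Real.sqrt (q x)| ≤ 2 := by
      filter_upwards [hple, hqle] with x h1 h2
      have := Real.sqrt_le_one.mpr h1
      have := Real.sqrt_le_one.mpr h2
      have := Real.sqrt_nonneg (p x)
      have := Real.sqrt_nonneg (q x)
      rw [abs_le]; constructor <;> linarith
    have hconj : (2 : ℝ).HolderConjugate 2 := Real.HolderConjugate.two_two
    have hCS := integral_mul_le_Lp_mul_Lq_of_nonneg hconj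
      (Filter.Eventually.of_forall fun x => abs_nonneg (Real.sqrt (p x) - Real.sqrt (q x)))
      (Filter.Eventually.of_forall fun x =>
        add_nonneg (Real.sqrt_nonneg (p x)) (Real.sqrt_nonneg (q x)))
      (hmem _ 1 hfm (by simpa using hfb))
      (hmem _ 2 hgm hgb)
    -- rewrite hCS
    have hprod : ∀ x, |Real.sqrt (p x) - Real.sqrt (q x)| * (Real.sqrt (p x) + Real.sqrt (q x))
        = |p x - q x| := by
      intro x
      rw [← abs_of_nonneg (add_nonneg (Real.sqrt_nonneg (p x)) (Real.sqrt_nonneg (q x))),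
        ← abs_mul]
      congr 1
      have hps : Real.sqrt (p x) ^ 2 = p x := Real.sq_sqrt (hp0 x)
      have hqs : Real.sqrt (q x) ^ 2 = q x := Real.sq_sqrt (hq0 x)
      linear_combination hps - hqs
    have hrpow2 : ∀ y : ℝ, 0 ≤ y → y ^ (2 : ℝ) = y ^ 2 := by
      intro y hy
      rw [show (2 : ℝ) = ((2 : ℕ) : ℝ) by norm_num, Real.rpow_natCast]
    have hfsq : ∫ x, |Real.sqrt (p x) - Real.sqrt (q x)| ^ (2 : ℝ) ∂(P + Q) = 2 - 2 * B := by
      rw [← hH2val]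
      refine integral_congr_ae (Filter.Eventually.of_forall fun x => ?_)
      show |Real.sqrt (p x) - Real.sqrt (q x)| ^ (2 : ℝ)
        = (Real.sqrt (p x) - Real.sqrt (q x)) ^ 2
      rw [hrpow2 _ (abs_nonneg _), sq_abs]
    have hgsq : ∫ x, (Real.sqrt (p x) + Real.sqrt (q x)) ^ (2 : ℝ) ∂(P + Q) = 2 + 2 * B := by
      rw [← hplusval]
      refine integral_congr_ae (Filter.Eventually.of_forall fun x => ?_)
      show (Real.sqrt (p x) + Real.sqrt (q x)) ^ (2 : ℝ)
        = (Real.sqrt (p x) + Real.sqrt (q x)) ^ 2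
      rw [hrpow2 _ (add_nonneg (Real.sqrt_nonneg _) (Real.sqrt_nonneg _))]
    have hTVint : ∫ x, |p x - q x| ∂(P + Q)
        ≤ (2 - 2 * B) ^ ((1 : ℝ) / 2) * (2 + 2 * B) ^ ((1 : ℝ) / 2) := by
      calc ∫ x, |p x - q x| ∂(P + Q)
          = ∫ x, |Real.sqrt (p x) - Real.sqrt (q x)| * (Real.sqrt (p x) + Real.sqrt (q x))
            ∂(P + Q) := by
            refine integral_congr_ae (Filter.Eventually.of_forall fun x => (hprod x).symm)
        _ ≤ _ := by rw [← hfsq, ← hgsq]; exact hCS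
    have hrw : (2 - 2 * B) ^ ((1 : ℝ) / 2) * (2 + 2 * B) ^ ((1 : ℝ) / 2)
        = 2 * Real.sqrt (1 - B ^ 2) := by
      rw [← Real.sqrt_eq_rpow, ← Real.sqrt_eq_rpow, ← Real.sqrt_mul (by linarith)]
      rw [show (2 - 2 * B) * (2 + 2 * B) = 4 * (1 - B ^ 2) by ring, Real.sqrt_mul (by norm_num),
        show Real.sqrt 4 = 2 by
          rw [show (4 : ℝ) = 2 ^ 2 by norm_num, Real.sqrt_sq (by norm_num)]]
    rw [hrw] at hTVint
    set T : ℝ := (1 / 2) * ∫ x, |p x - q x| ∂(P + Q) with hT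
    have hT0 : 0 ≤ T := by
      have h0 : 0 ≤ ∫ x, |p x - q x| ∂(P + Q) := integral_nonneg fun x => abs_nonneg _
      rw [hT]; linarith
    have hTle : T ≤ Real.sqrt (1 - B ^ 2) := by
      rw [hT]; linarith
    have hB2 : B ^ 2 ≤ 1 - T ^ 2 := by
      have h1B2 : 0 ≤ 1 - B ^ 2 := by nlinarith
      have := pow_le_pow_left₀ hT0 hTle 2
      rw [Real.sq_sqrt h1B2] at this
      linarith
    have : B ≤ Real.sqrt (1 - T ^ 2) := by
      calc B = Real.sqrt (B ^ 2) := (Real.sqrt_sq hB0).symm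
        _ ≤ Real.sqrt (1 - T ^ 2) := Real.sqrt_le_sqrt hB2
    linarith
end

section
/- Let p_1, …, p_K : ℝ^d → ℝ be everywhere-positive differentiable functions, let w_1, …, w_K > 0, and let S be a nonempty proper subset of {1, …, K}. Then at every point x ∈ ℝ^d, ‖∇ln(Σ_{i∈S} w_i p_i)(x) − ∇ln(Σ_{i∈[K]} w_i p_i)(x)‖² = ((Σ_{i∈[K]∖S} w_i p_i(x)) / (Σ_{i∈[K]} w_i p_i(x)))² · ‖∇ln(Σ_{i∈S} w_i p_i)(x) − ∇ln(Σ_{i∈[K]∖S} w_i p_i)(x)‖². -/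
open Real Finset

lemma hasGradientAt_log_comp {d : ℕ} {F : EuclideanSpace ℝ (Fin d) → ℝ}
    {x : EuclideanSpace ℝ (Fin d)} (hF : DifferentiableAt ℝ F x) (hne : F x ≠ 0) :
    HasGradientAt (fun y => Real.log (F y)) ((F x)⁻¹ • gradient F x) x := by
  have h1 : HasGradientAt F (gradient F x) x := hF.hasGradientAt
  have h2 := (Real.hasDerivAt_log hne).comp_hasFDerivAt x
    ((hasGradientAt_iff_hasFDerivAt).1 h1)
  rw [hasGradientAt_iff_hasFDerivAt, map_smul]
  exact h2

/-- For everywhere-positive differentiable `p₁, …, p_K : ℝ^d → ℝ`,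
positive weights `w₁, …, w_K`, and a nonempty proper subset `S ⊊ [K]`, at every point `x`:
`‖∇ln(Σ_{i∈S} wᵢpᵢ)(x) − ∇ln(Σ_{i∈[K]} wᵢpᵢ)(x)‖²
  = ((Σ_{i∉S} wᵢpᵢ(x)) / (Σ_{i∈[K]} wᵢpᵢ(x)))²
    · ‖∇ln(Σ_{i∈S} wᵢpᵢ)(x) − ∇ln(Σ_{i∉S} wᵢpᵢ)(x)‖²`. -/
theorem score_diff_rewrite {d K : ℕ}
    (p : Fin K → EuclideanSpace ℝ (Fin d) → ℝ) (w : Fin K → ℝ)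
    (hpos : ∀ i x, 0 < p i x) (hdiff : ∀ i, Differentiable ℝ (p i))
    (hw : ∀ i, 0 < w i)
    (S : Finset (Fin K)) (hS : S.Nonempty) (hS' : S ≠ Finset.univ)
    (x : EuclideanSpace ℝ (Fin d)) :
    ‖gradient (fun y => Real.log (∑ i ∈ S, w i * p i y)) x -
        gradient (fun y => Real.log (∑ i : Fin K, w i * p i y)) x‖ ^ 2 =
      ((∑ i ∈ Sᶜ, w i * p i x) / (∑ i : Fin K, w i * p i x)) ^ 2 *
        ‖gradient (fun y => Real.log (∑ i ∈ S, w i * p i y)) x -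
          gradient (fun y => Real.log (∑ i ∈ Sᶜ, w i * p i y)) x‖ ^ 2 := by
  set F : EuclideanSpace ℝ (Fin d) → ℝ := fun y => ∑ i ∈ S, w i * p i y with hF
  set G : EuclideanSpace ℝ (Fin d) → ℝ := fun y => ∑ i ∈ Sᶜ, w i * p i y with hG
  have hFd : Differentiable ℝ F := by
    apply Differentiable.fun_sum; intro i _; exact (hdiff i).const_mul (w i)
  have hGd : Differentiable ℝ G := by
    apply Differentiable.fun_sum; intro i _; exact (hdiff i).const_mul (w i)
  have hf : 0 < F x := Finset.sum_pos (fun i _ => mul_pos (hw i) (hpos i x)) hS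
  have hg : 0 < G x :=
    Finset.sum_pos (fun i _ => mul_pos (hw i) (hpos i x)) (Finset.nonempty_iff_ne_empty.2 fun h => hS' ((Finset.compl_eq_empty_iff S).1 h))
  have hsum : ∀ y, ∑ i : Fin K, w i * p i y = F y + G y := fun y =>
    (Finset.sum_add_sum_compl S _).symm
  set a := gradient F x
  set b := gradient G x
  have hFGd : DifferentiableAt ℝ (fun y => F y + G y) x := (hFd x).add (hGd x)
  have hab : gradient (fun y => F y + G y) x = a + b := by
    apply HasGradientAt.gradient
    rw [hasGradientAt_iff_hasFDerivAt, map_add]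
    exact ((hasGradientAt_iff_hasFDerivAt).1 (hFd x).hasGradientAt).add
      ((hasGradientAt_iff_hasFDerivAt).1 (hGd x).hasGradientAt)
  have g1 : gradient (fun y => Real.log (F y)) x = (F x)⁻¹ • a :=
    (hasGradientAt_log_comp (hFd x) hf.ne').gradient
  have g2 : gradient (fun y => Real.log (G y)) x = (G x)⁻¹ • b :=
    (hasGradientAt_log_comp (hGd x) hg.ne').gradient
  have g3 : gradient (fun y => Real.log (∑ i : Fin K, w i * p i y)) x
      = (F x + G x)⁻¹ • (a + b) := by
    simp only [hsum]
    rw [← hab]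
    exact (hasGradientAt_log_comp hFGd (by rw [hab] at *; positivity)).gradient
  have key : (F x)⁻¹ • a - (F x + G x)⁻¹ • (a + b)
      = (G x / (F x + G x)) • ((F x)⁻¹ • a - (G x)⁻¹ • b) := by
    have h1 : F x ≠ 0 := hf.ne'
    have h2 : G x ≠ 0 := hg.ne'
    have h3 : F x + G x ≠ 0 := by positivity
    match_scalars <;> field_simp <;> (try ring)
  rw [hsum x, g1, g2, g3, key, norm_smul, mul_pow, Real.norm_eq_abs, sq_abs]
end

section
/- There is an absolute constant C > 0 with the following property. In the Gaussian mixture setup, for every nonempty proper subset S ⊊ [K], every j ∈ S, and every t ≥ 0: ∫_{ℝ^d} ((Σ_{i∈[K]∖S} w_i p_t^i(x)) / (Σ_{i∈[K]} w_i p_t^i(x)))⁴ p_t^j(x) dx ≤ C · K · W̄ · exp(−e^{−2t} Δ(S)² / (8 λ̄)). -/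
open MeasureTheory Real Matrix Finset

/-- The Gaussian density `g_{μ,Σ}(x) = (2π)^{−d/2} (det Σ)^{−1/2} exp(−(x−μ)ᵀΣ⁻¹(x−μ)/2)`
on `ℝ^d`. -/
noncomputable def gaussPDF {d : ℕ} (μ : EuclideanSpace ℝ (Fin d))
    (S : Matrix (Fin d) (Fin d) ℝ) (x : EuclideanSpace ℝ (Fin d)) : ℝ :=
  (2 * π) ^ (-(d : ℝ) / 2) * S.det ^ (-(1 : ℝ) / 2) *
    Real.exp (-((fun i => x i - μ i) ⬝ᵥ S⁻¹.mulVec fun i => x i - μ i) / 2)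

/-- The covariance of a component at time `t` of the Ornstein–Uhlenbeck process:
`Σ(t) = e^{−2t} Σ + (1 − e^{−2t}) Id`. -/
noncomputable def covAt {d : ℕ} (S : Matrix (Fin d) (Fin d) ℝ) (t : ℝ) :
    Matrix (Fin d) (Fin d) ℝ :=
  Real.exp (-2 * t) • S + (1 - Real.exp (-2 * t)) • (1 : Matrix (Fin d) (Fin d) ℝ)

namespace Gauss12

variable {d : ℕ}

lemma gaussPDF_pos {A : Matrix (Fin d) (Fin d) ℝ} (hA : 0 < A.det)
    (m x : EuclideanSpace ℝ (Fin d)) : 0 < gaussPDF m A x :=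
  mul_pos (mul_pos (Real.rpow_pos_of_pos (by positivity) _) (Real.rpow_pos_of_pos hA _))
    (Real.exp_pos _)

lemma gauss_key {A : Matrix (Fin d) (Fin d) ℝ} (hA : A.PosDef) (m : EuclideanSpace ℝ (Fin d)) :
    Integrable (fun x : EuclideanSpace ℝ (Fin d) => gaussPDF m A x) ∧
      ∫ x : EuclideanSpace ℝ (Fin d), gaussPDF m A x = 1 := by
  classical
  have hH : A.IsHermitian := hA.1
  set lam : Fin d → ℝ := hH.eigenvalues with hlamdef
  have hlpos : ∀ k, 0 < lam k := fun k => hA.eigenvalues_pos k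
  have hdet : A.det = ∏ k, lam k := by simpa using hH.det_eq_prod_eigenvalues
  have hdetpos : 0 < A.det := hA.det_pos
  have hdet0 : A.det ≠ 0 := hdetpos.ne'
  set b := hH.eigenvectorBasis with hbdef
  set Z : ℝ := (2 * π) ^ (-(d : ℝ) / 2) * A.det ^ (-(1 : ℝ) / 2) with hZdef
  -- eigenvectors of the inverse
  have hinv_eig : ∀ k, A⁻¹ *ᵥ (b k : Fin d → ℝ) = (lam k)⁻¹ • (b k : Fin d → ℝ) := by
    intro k
    have h1 : A *ᵥ (b k : Fin d → ℝ) = lam k • (b k : Fin d → ℝ) :=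
      hH.mulVec_eigenvectorBasis k
    have h2 : A⁻¹ *ᵥ (A *ᵥ (b k : Fin d → ℝ)) = (b k : Fin d → ℝ) := by
      rw [Matrix.mulVec_mulVec, Matrix.nonsing_inv_mul A hdet0.isUnit, Matrix.one_mulVec]
    rw [h1, Matrix.mulVec_smul] at h2
    calc A⁻¹ *ᵥ (b k : Fin d → ℝ)
        = (lam k)⁻¹ • (lam k • (A⁻¹ *ᵥ (b k : Fin d → ℝ))) := by
          rw [smul_smul, inv_mul_cancel₀ (hlpos k).ne', one_smul]
      _ = (lam k)⁻¹ • (b k : Fin d → ℝ) := by rw [h2]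
  have hAt : Aᵀ = A := by
    rw [← Matrix.conjTranspose_eq_transpose_of_trivial]; exact hH
  have hsymm : A⁻¹ᵀ = A⁻¹ := by rw [Matrix.transpose_nonsing_inv, hAt]
  have hswap : ∀ vv ww : Fin d → ℝ, vv ⬝ᵥ A⁻¹ *ᵥ ww = (A⁻¹ *ᵥ vv) ⬝ᵥ ww := by
    intro vv ww
    rw [Matrix.dotProduct_mulVec]
    conv_lhs => rw [← hsymm]
    rw [Matrix.vecMul_transpose]
  have hip : ∀ u v : EuclideanSpace ℝ (Fin d),
      (inner ℝ u v : ℝ) = (u : Fin d → ℝ) ⬝ᵥ (v : Fin d → ℝ) := by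
    intro u v
    simp [PiLp.inner_apply, RCLike.inner_apply, dotProduct]
    exact Finset.sum_congr rfl fun _ _ => mul_comm _ _
  have hq : ∀ y : EuclideanSpace ℝ (Fin d),
      ((b.repr.symm y : Fin d → ℝ) ⬝ᵥ A⁻¹ *ᵥ (b.repr.symm y : Fin d → ℝ))
        = ∑ k, (lam k)⁻¹ * (y k) ^ 2 := by
    intro y
    set v : EuclideanSpace ℝ (Fin d) := b.repr.symm y with hv
    set u : EuclideanSpace ℝ (Fin d) := WithLp.toLp 2 (A⁻¹ *ᵥ (v : Fin d → ℝ) : Fin d → ℝ) with hu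
    have hrv : b.repr v = y := b.repr.apply_symm_apply y
    have hru : ∀ k, b.repr u k = (lam k)⁻¹ * y k := by
      intro k
      rw [b.repr_apply_apply, hip (b k) u]
      show (b k : Fin d → ℝ) ⬝ᵥ A⁻¹ *ᵥ (v : Fin d → ℝ) = _
      rw [hswap, hinv_eig k, smul_dotProduct]
      have : (b k : Fin d → ℝ) ⬝ᵥ (v : Fin d → ℝ) = y k := by
        rw [← hip, ← b.repr_apply_apply, hrv]
      rw [this, smul_eq_mul]
    have h1 : (v : Fin d → ℝ) ⬝ᵥ A⁻¹ *ᵥ (v : Fin d → ℝ) = (inner ℝ v u : ℝ) := (hip v u).symm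
    have h2 : (inner ℝ v u : ℝ) = ∑ k, (b.repr v k) * (b.repr u k) := by
      rw [← b.repr.inner_map_map v u, hip]
      rfl
    rw [h1, h2]
    exact Finset.sum_congr rfl fun k _ => by rw [hrv, hru k]; ring
  -- pointwise formula after the change of variables
  have hpoint : ∀ y : EuclideanSpace ℝ (Fin d),
      gaussPDF m A (m + b.repr.symm y) = Z * ∏ k, rexp (-(2 * lam k)⁻¹ * (y k) ^ 2) := by
    intro y
    have hvec : (fun i => (m + b.repr.symm y) i - m i)
        = fun i => (b.repr.symm y : Fin d → ℝ) i := by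
      funext i
      have : (m + b.repr.symm y) i = m i + (b.repr.symm y) i := rfl
      rw [this]; ring
    rw [gaussPDF, hvec]
    have hqq : (fun i => (b.repr.symm y : Fin d → ℝ) i) ⬝ᵥ
        A⁻¹ *ᵥ (fun i => (b.repr.symm y : Fin d → ℝ) i) = ∑ k, (lam k)⁻¹ * (y k) ^ 2 := hq y
    rw [hqq, ← hZdef]
    congr 1
    rw [← Real.exp_sum]
    congr 1
    rw [neg_div, Finset.sum_div, ← Finset.sum_neg_distrib]
    exact Finset.sum_congr rfl fun k _ => by rw [mul_inv]; ring
  -- the product-form function on the plain pi type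
  set P : (Fin d → ℝ) → ℝ := fun y => Z * ∏ k, rexp (-(2 * lam k)⁻¹ * (y k) ^ 2) with hPdef
  have hPint : Integrable P := by
    exact (Integrable.fintype_prod (f := fun k (s : ℝ) => rexp (-(2 * lam k)⁻¹ * s ^ 2))
      (fun k => integrable_exp_neg_mul_sq (by have := hlpos k; positivity))).const_mul Z
  have hPval : ∫ z : Fin d → ℝ, P z = Z * ∏ k, Real.sqrt (π / (2 * lam k)⁻¹) := by
    rw [hPdef, MeasureTheory.integral_const_mul,
      MeasureTheory.integral_fintype_prod_volume_eq_prod (ι := Fin d)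
        (fun k (s : ℝ) => rexp (-(2 * lam k)⁻¹ * s ^ 2))]
    congr 1
    exact Finset.prod_congr rfl fun k _ => integral_gaussian _
  -- change of variables machinery
  have hmp1 := b.measurePreserving_repr_symm
  have hemb1 : MeasurableEmbedding
      (b.repr.symm : EuclideanSpace ℝ (Fin d) → EuclideanSpace ℝ (Fin d)) :=
    b.repr.symm.toHomeomorph.measurableEmbedding
  have hmp2 := EuclideanSpace.volume_preserving_symm_measurableEquiv_toLp (Fin d)
  have hemb2 : MeasurableEmbedding ((MeasurableEquiv.toLp 2 (Fin d → ℝ)).symm) :=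
    ((MeasurableEquiv.toLp 2 (Fin d → ℝ)).symm).measurableEmbedding
  have hmp3 := measurePreserving_add_left (volume : Measure (EuclideanSpace ℝ (Fin d))) m
  have hemb3 : MeasurableEmbedding (fun x : EuclideanSpace ℝ (Fin d) => m + x) :=
    (MeasurableEquiv.addLeft m).measurableEmbedding
  have hQP : (fun y : EuclideanSpace ℝ (Fin d) => gaussPDF m A (m + b.repr.symm y))
      = fun y : EuclideanSpace ℝ (Fin d) => P ((MeasurableEquiv.toLp 2 (Fin d → ℝ)).symm y) := by
    funext y
    exact hpoint y
  constructor
  · have h1 : Integrable (fun y : EuclideanSpace ℝ (Fin d) =>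
        P ((MeasurableEquiv.toLp 2 (Fin d → ℝ)).symm y)) :=
      (hmp2.integrable_comp_emb hemb2).2 hPint
    rw [← hQP] at h1
    have h2 : Integrable (fun x : EuclideanSpace ℝ (Fin d) => gaussPDF m A (m + x)) :=
      (hmp1.integrable_comp_emb hemb1).1 h1
    exact (hmp3.integrable_comp_emb hemb3).1 h2
  · have e1 : ∫ x : EuclideanSpace ℝ (Fin d), gaussPDF m A x
        = ∫ x : EuclideanSpace ℝ (Fin d), gaussPDF m A (m + x) :=
      (integral_add_left_eq_self (fun x => gaussPDF m A x) m).symm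
    have e2 : ∫ x : EuclideanSpace ℝ (Fin d), gaussPDF m A (m + x)
        = ∫ y : EuclideanSpace ℝ (Fin d), gaussPDF m A (m + b.repr.symm y) :=
      (hmp1.integral_comp hemb1 (fun x => gaussPDF m A (m + x))).symm
    have e3 : ∫ y : EuclideanSpace ℝ (Fin d), gaussPDF m A (m + b.repr.symm y)
        = ∫ z : Fin d → ℝ, P z := by
      rw [hQP]
      exact hmp2.integral_comp hemb2 P
    rw [e1, e2, e3, hPval]
    -- final numeric computation
    have hsqrt : ∀ k, Real.sqrt (π / (2 * lam k)⁻¹)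
        = (2 * π) ^ ((1 : ℝ) / 2) * (lam k) ^ ((1 : ℝ) / 2) := by
      intro k
      have h : π / (2 * lam k)⁻¹ = (2 * π) * lam k := by
        field_simp
      rw [h, ← Real.sqrt_eq_rpow, ← Real.sqrt_eq_rpow,
        Real.sqrt_mul (by positivity)]
    have hprod : ∏ k, Real.sqrt (π / (2 * lam k)⁻¹)
        = (2 * π) ^ ((d : ℝ) / 2) * (A.det) ^ ((1 : ℝ) / 2) := by
      rw [Finset.prod_congr rfl fun k _ => hsqrt k, Finset.prod_mul_distrib,
        Finset.prod_const, Real.finset_prod_rpow univ lam (fun i _ => (hlpos i).le),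
        ← hdet, card_univ, Fintype.card_fin, ← Real.rpow_natCast ((2*π) ^ ((1:ℝ)/2)) d,
        ← Real.rpow_mul (by positivity)]
      ring_nf
    rw [hprod, hZdef]
    rw [show ((2:ℝ) * π) ^ (-(d : ℝ) / 2) * A.det ^ (-(1:ℝ) / 2) *
        ((2 * π) ^ ((d : ℝ) / 2) * A.det ^ ((1:ℝ) / 2))
      = ((2 * π) ^ (-(d : ℝ) / 2) * (2 * π) ^ ((d : ℝ) / 2)) *
        (A.det ^ (-(1:ℝ) / 2) * A.det ^ ((1:ℝ) / 2)) from by ring]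
    rw [← Real.rpow_add (by positivity), ← Real.rpow_add hdetpos,
      show (-(d:ℝ)/2 + (d:ℝ)/2) = 0 by ring, show (-(1:ℝ)/2 + (1:ℝ)/2) = 0 by ring,
      Real.rpow_zero, Real.rpow_zero, mul_one]

lemma mgf_key {A : Matrix (Fin d) (Fin d) ℝ} (hA : A.PosDef) (hAt : Aᵀ = A)
    (m : EuclideanSpace ℝ (Fin d)) (c θ : Fin d → ℝ) :
    Integrable (fun x : EuclideanSpace ℝ (Fin d) =>
        gaussPDF m A x * rexp (θ ⬝ᵥ fun i => x i - c i)) ∧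
      ∫ x : EuclideanSpace ℝ (Fin d), gaussPDF m A x * rexp (θ ⬝ᵥ fun i => x i - c i)
        = rexp (θ ⬝ᵥ A *ᵥ θ / 2 + (θ ⬝ᵥ fun i => m i - c i)) := by
  have hdet0 : A.det ≠ 0 := hA.det_pos.ne'
  have hsymm : A⁻¹ᵀ = A⁻¹ := by rw [Matrix.transpose_nonsing_inv, hAt]
  have hswap : ∀ vv ww : Fin d → ℝ, vv ⬝ᵥ A⁻¹ *ᵥ ww = (A⁻¹ *ᵥ vv) ⬝ᵥ ww := by
    intro vv ww
    rw [Matrix.dotProduct_mulVec]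
    conv_lhs => rw [← hsymm]
    rw [Matrix.vecMul_transpose]
  set m' : EuclideanSpace ℝ (Fin d) := WithLp.toLp 2 (fun i => m i + (A *ᵥ θ) i : Fin d → ℝ) with hm'
  have hAinv : A⁻¹ *ᵥ (A *ᵥ θ) = θ := by
    rw [Matrix.mulVec_mulVec, Matrix.nonsing_inv_mul A hdet0.isUnit, Matrix.one_mulVec]
  have key : ∀ x : EuclideanSpace ℝ (Fin d),
      gaussPDF m A x * rexp (θ ⬝ᵥ fun i => x i - c i)
        = rexp (θ ⬝ᵥ A *ᵥ θ / 2 + (θ ⬝ᵥ fun i => m i - c i)) * gaussPDF m' A x := by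
    intro x
    have hid : (-(((fun i => x i - m i) ⬝ᵥ A⁻¹ *ᵥ fun i => x i - m i)) / 2)
          + (θ ⬝ᵥ fun i => x i - c i)
        = (θ ⬝ᵥ A *ᵥ θ / 2 + (θ ⬝ᵥ fun i => m i - c i))
          + (-(((fun i => x i - m' i) ⬝ᵥ A⁻¹ *ᵥ fun i => x i - m' i)) / 2) := by
      set u : Fin d → ℝ := fun i => x i - m i with hu
      set a : Fin d → ℝ := A *ᵥ θ with ha
      have hsub : (fun i => x i - m' i) = u - a := by
        funext i
        show x i - (m i + (A *ᵥ θ) i) = (x i - m i) - (A *ᵥ θ) i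
        ring
      have hxc : (fun i => x i - c i) = u + fun i => m i - c i := by
        funext i
        show x i - c i = (x i - m i) + (m i - c i)
        ring
      rw [hsub, hxc, dotProduct_add, Matrix.mulVec_sub, sub_dotProduct,
        dotProduct_sub, dotProduct_sub, hAinv, hswap a u, hAinv,
        dotProduct_comm θ u, dotProduct_comm θ a]
      ring
    rw [gaussPDF, gaussPDF, mul_assoc, ← Real.exp_add, hid, Real.exp_add]
    ring
  have h := gauss_key hA m'
  have hfe : (fun x : EuclideanSpace ℝ (Fin d) =>
      gaussPDF m A x * rexp (θ ⬝ᵥ fun i => x i - c i))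
      = fun x => rexp (θ ⬝ᵥ A *ᵥ θ / 2 + (θ ⬝ᵥ fun i => m i - c i)) * gaussPDF m' A x :=
    funext key
  constructor
  · rw [hfe]
    exact h.1.const_mul _
  · rw [hfe, MeasureTheory.integral_const_mul, h.2, mul_one]


lemma covAt_props {Sg : Matrix (Fin d) (Fin d) ℝ} {lamlo lamhi t : ℝ}
    (hlo : 0 < lamlo) (hlo1 : lamlo ≤ 1) (hhi : 1 ≤ lamhi)
    (hsym : Sg.IsSymm)
    (hform : ∀ v : Fin d → ℝ, lamlo * ∑ k, v k ^ 2 ≤ v ⬝ᵥ Sg.mulVec v ∧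
        v ⬝ᵥ Sg.mulVec v ≤ lamhi * ∑ k, v k ^ 2)
    (ht : 0 ≤ t) :
    (covAt Sg t).PosDef ∧ (covAt Sg t)ᵀ = covAt Sg t ∧
      (∀ v : Fin d → ℝ, v ⬝ᵥ (covAt Sg t) *ᵥ v ≤ lamhi * ∑ k, v k ^ 2) := by
  have hε0 : 0 < rexp (-2 * t) := Real.exp_pos _
  have hε1 : rexp (-2 * t) ≤ 1 := by
    have := Real.exp_le_exp.mpr (show -2 * t ≤ 0 by linarith)
    simpa using this
  have hT : (covAt Sg t)ᵀ = covAt Sg t := by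
    rw [covAt, Matrix.transpose_add, Matrix.transpose_smul, Matrix.transpose_smul,
      Matrix.transpose_one, hsym.eq]
  have hform' : ∀ v : Fin d → ℝ, v ⬝ᵥ (covAt Sg t) *ᵥ v
      = rexp (-2 * t) * (v ⬝ᵥ Sg *ᵥ v) + (1 - rexp (-2 * t)) * (∑ k, v k ^ 2) := by
    intro v
    rw [covAt, Matrix.add_mulVec, Matrix.smul_mulVec, Matrix.smul_mulVec,
      Matrix.one_mulVec, dotProduct_add, dotProduct_smul, dotProduct_smul,
      smul_eq_mul, smul_eq_mul]
    have hvv : v ⬝ᵥ v = ∑ k, v k ^ 2 := by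
      simp [dotProduct, pow_two]
    rw [hvv]
  refine ⟨Matrix.PosDef.of_dotProduct_mulVec_pos ?_ ?_, hT, ?_⟩
  · rw [Matrix.IsHermitian, Matrix.conjTranspose_eq_transpose_of_trivial]
    exact hT
  · intro v hv
    have hsumpos : 0 < ∑ k, v k ^ 2 := by
      have hex : ∃ k, v k ≠ 0 := by
        by_contra h
        push_neg at h
        exact hv (funext h)
      obtain ⟨k, hk⟩ := hex
      exact Finset.sum_pos' (fun i _ => sq_nonneg _) ⟨k, Finset.mem_univ k, by positivity⟩
    have h2 := (hform v).1
    have hstar : star v = v := by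
      funext i
      simp
    rw [hstar, hform' v]
    nlinarith [mul_le_mul_of_nonneg_left h2 hε0.le, mul_pos hε0 (mul_pos hlo hsumpos),
      mul_nonneg (sub_nonneg.mpr hε1) hsumpos.le]
  · intro v
    have h2 := (hform v).2
    rw [hform' v]
    have hs : 0 ≤ ∑ k, v k ^ 2 := Finset.sum_nonneg fun i _ => sq_nonneg _
    nlinarith [mul_le_mul_of_nonneg_left h2 hε0.le,
      mul_nonneg (mul_nonneg (sub_nonneg.mpr hε1) (sub_nonneg.mpr hhi)) hs]

lemma ratio_le {K : ℕ} (p w : Fin K → ℝ) (hp : ∀ i, 0 < p i) (hw : ∀ i, 0 < w i)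
    (S : Finset (Fin K)) (j : Fin K) (hj : j ∈ S) :
    ((∑ i ∈ Sᶜ, w i * p i) / (∑ i, w i * p i)) ^ 4 * p j
      ≤ ∑ i ∈ Sᶜ, min ((w i / w j) * p i) (p j) := by
  set N := ∑ i ∈ Sᶜ, w i * p i with hN
  set T := ∑ i : Fin K, w i * p i with hT
  have hNnn : 0 ≤ N := Finset.sum_nonneg fun i _ => (mul_pos (hw i) (hp i)).le
  have hSnn : 0 ≤ ∑ i ∈ S, w i * p i := Finset.sum_nonneg fun i _ => (mul_pos (hw i) (hp i)).le
  have hTsplit : ∑ i ∈ S, w i * p i + N = T := Finset.sum_add_sum_compl S _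
  have hwj : w j * p j ≤ ∑ i ∈ S, w i * p i :=
    Finset.single_le_sum (f := fun i => w i * p i)
      (fun i _ => (mul_pos (hw i) (hp i)).le) hj
  have hwjpos : 0 < w j * p j := mul_pos (hw j) (hp j)
  have hTpos : 0 < T := by linarith
  have hTge : w j * p j ≤ T := by linarith
  have hr1 : N / T ≤ 1 := by
    rw [div_le_one hTpos]
    linarith
  have hr0 : 0 ≤ N / T := div_nonneg hNnn hTpos.le
  have hpow : (N / T) ^ 4 ≤ N / T := by
    calc (N / T) ^ 4 ≤ (N / T) ^ 1 := pow_le_pow_of_le_one hr0 hr1 (by norm_num)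
      _ = N / T := pow_one _
  calc (N / T) ^ 4 * p j ≤ (N / T) * p j := mul_le_mul_of_nonneg_right hpow (hp j).le
    _ = ∑ i ∈ Sᶜ, (w i * p i / T) * p j := by
        rw [hN, Finset.sum_div, Finset.sum_mul]
    _ ≤ ∑ i ∈ Sᶜ, min ((w i / w j) * p i) (p j) := by
        refine Finset.sum_le_sum fun i _ => le_min ?_ ?_
        · have heq : (w i * p i / (w j * p j)) * p j = (w i / w j) * p i := by
            have h0 : w j ≠ 0 := (hw j).ne'
            have h1 : p j ≠ 0 := (hp j).ne'
            field_simp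
          calc (w i * p i / T) * p j ≤ (w i * p i / (w j * p j)) * p j :=
              mul_le_mul_of_nonneg_right
                (div_le_div_of_nonneg_left (mul_pos (hw i) (hp i)).le hwjpos hTge) (hp j).le
            _ = (w i / w j) * p i := heq
        · have hle1 : w i * p i / T ≤ 1 := by
            rw [div_le_one hTpos, hT]
            exact Finset.single_le_sum (f := fun l => w l * p l)
              (fun l _ => (mul_pos (hw l) (hp l)).le) (Finset.mem_univ i)
          exact mul_le_of_le_one_left (hp j).le hle1

lemma expo_le {M : Matrix (Fin d) (Fin d) ℝ} {φ wv : Fin d → ℝ} {nv lamhi : ℝ}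
    (hl : 0 < lamhi) (hnv : 0 ≤ nv)
    (h1 : φ ⬝ᵥ M *ᵥ φ ≤ (1 / (2 * lamhi)) ^ 2 * (lamhi * nv))
    (h2 : φ ⬝ᵥ wv = -(1 / (2 * lamhi) / 2) * nv) :
    φ ⬝ᵥ M *ᵥ φ / 2 + φ ⬝ᵥ wv ≤ -nv / (8 * lamhi) := by
  rw [h2]
  have hkey : (1 / (2 * lamhi)) ^ 2 * (lamhi * nv) / 2 - (1 / (2 * lamhi) / 2) * nv
      = -nv / (8 * lamhi) := by
    field_simp
    ring
  linarith

lemma dot_scaled (v : Fin d → ℝ) (a b : ℝ) :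
    (fun k => a * v k) ⬝ᵥ (fun k => b * v k) = (a * b) * ∑ k, v k ^ 2 := by
  show ∑ k, (a * v k) * (b * v k) = _
  rw [Finset.mul_sum]
  exact Finset.sum_congr rfl fun k _ => by ring

lemma quad_scaled_le {M : Matrix (Fin d) (Fin d) ℝ} {lamhi : ℝ} (v : Fin d → ℝ) (a : ℝ)
    (hM : ∀ u : Fin d → ℝ, u ⬝ᵥ M *ᵥ u ≤ lamhi * ∑ k, u k ^ 2) :
    (fun k => a * v k) ⬝ᵥ M *ᵥ (fun k => a * v k) ≤ a ^ 2 * (lamhi * ∑ k, v k ^ 2) := by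
  have hsm : (fun k => a * v k) = a • v := rfl
  rw [hsm, smul_dotProduct, Matrix.mulVec_smul, dotProduct_smul]
  calc a • (a • (v ⬝ᵥ M *ᵥ v)) = a ^ 2 * (v ⬝ᵥ M *ᵥ v) := by
        rw [smul_eq_mul, smul_eq_mul]; ring
    _ ≤ a ^ 2 * (lamhi * ∑ k, v k ^ 2) := mul_le_mul_of_nonneg_left (hM v) (sq_nonneg a)

lemma dot_scaled' {φ ψ v : Fin d → ℝ} {a b : ℝ} (hφ : ∀ k, φ k = a * v k)
    (hψ : ∀ k, ψ k = b * v k) :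
    φ ⬝ᵥ ψ = (a * b) * ∑ k, v k ^ 2 := by
  show ∑ k, φ k * ψ k = _
  rw [Finset.mul_sum]
  exact Finset.sum_congr rfl fun k _ => by rw [hφ k, hψ k]; ring

lemma quad_scaled_le' {M : Matrix (Fin d) (Fin d) ℝ} {lamhi : ℝ} {φ v : Fin d → ℝ} {a : ℝ}
    (hφ : ∀ k, φ k = a * v k)
    (hM : ∀ u : Fin d → ℝ, u ⬝ᵥ M *ᵥ u ≤ lamhi * ∑ k, u k ^ 2) :
    φ ⬝ᵥ M *ᵥ φ ≤ a ^ 2 * (lamhi * ∑ k, v k ^ 2) := by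
  have hfe : φ = a • v := funext fun k => by rw [hφ k]; rfl
  rw [hfe, smul_dotProduct, Matrix.mulVec_smul, dotProduct_smul]
  calc a • (a • (v ⬝ᵥ M *ᵥ v)) = a ^ 2 * (v ⬝ᵥ M *ᵥ v) := by
        rw [smul_eq_mul, smul_eq_mul]; ring
    _ ≤ a ^ 2 * (lamhi * ∑ k, v k ^ 2) := mul_le_mul_of_nonneg_left (hM v) (sq_nonneg a)

lemma dot_neg' {φ ψ w : Fin d → ℝ} (h : ∀ k, φ k = -ψ k) : φ ⬝ᵥ w = -(ψ ⬝ᵥ w) := by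
  have hfe : φ = -ψ := funext fun k => by rw [h k]; rfl
  rw [hfe, neg_dotProduct]

end Gauss12

/-- There is an absolute constant `C > 0` such that in the Gaussian
mixture setup (symmetric covariances with all eigenvalues in `[λ̲, λ̄]`,
`0 < λ̲ ≤ 1 ≤ λ̄`, positive weights summing to one, `W̄ = max_{i,j} wᵢ/wⱼ`,
`Δ(S) = min_{ℓ∈S, j∉S} ‖μ_ℓ − μ_j‖`), for every nonempty proper `S ⊊ [K]`,
every `j ∈ S`, and every `t ≥ 0`:
`∫ ((Σ_{i∉S} wᵢ p_tⁱ(x)) / (Σ_{i∈[K]} wᵢ p_tⁱ(x)))⁴ p_tʲ(x) dx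
  ≤ C · K · W̄ · exp(−e^{−2t} Δ(S)² / (8 λ̄))`. -/
theorem gaussian_ratio_bound :
    ∃ C : ℝ, 0 < C ∧
      ∀ (d K : ℕ) (μ : Fin K → EuclideanSpace ℝ (Fin d))
        (Sig : Fin K → Matrix (Fin d) (Fin d) ℝ) (w : Fin K → ℝ) (lamlo lamhi : ℝ),
        0 < lamlo → lamlo ≤ 1 → 1 ≤ lamhi →
        (∀ i, (Sig i).IsSymm) →
        (∀ i (v : Fin d → ℝ),
          lamlo * ∑ k, v k ^ 2 ≤ v ⬝ᵥ (Sig i).mulVec v ∧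
          v ⬝ᵥ (Sig i).mulVec v ≤ lamhi * ∑ k, v k ^ 2) →
        (∀ i, 0 < w i) → (∑ i, w i = 1) →
        ∀ S : Finset (Fin K), S.Nonempty → S ≠ Finset.univ →
        ∀ j ∈ S, ∀ t : ℝ, 0 ≤ t →
          (∫ x, ((∑ i ∈ Sᶜ, w i * gaussPDF (Real.exp (-t) • μ i) (covAt (Sig i) t) x) /
              (∑ i : Fin K, w i * gaussPDF (Real.exp (-t) • μ i) (covAt (Sig i) t) x)) ^ 4 *
            gaussPDF (Real.exp (-t) • μ j) (covAt (Sig j) t) x) ≤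
          C * K * (⨆ ij : Fin K × Fin K, w ij.1 / w ij.2) *
            Real.exp (-Real.exp (-2 * t) *
              (⨅ ij : {ij : Fin K × Fin K // ij.1 ∈ S ∧ ij.2 ∉ S}, ‖μ ij.1.1 - μ ij.1.2‖) ^ 2 /
              (8 * lamhi)) := by
  classical
  refine ⟨2, by norm_num, ?_⟩
  intro d K μ Sig w lamlo lamhi hlo hlo1 hhi hsymm hform hw hwsum S hSne hSuniv j hj t ht
  obtain ⟨i₀, hi₀⟩ : ∃ i, i ∉ S := by
    by_contra h
    push_neg at h
    exact hSuniv (Finset.eq_univ_iff_forall.mpr h)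
  haveI hne : Nonempty {ij : Fin K × Fin K // ij.1 ∈ S ∧ ij.2 ∉ S} := ⟨⟨(j, i₀), hj, hi₀⟩⟩
  set Δ : ℝ := ⨅ ij : {ij : Fin K × Fin K // ij.1 ∈ S ∧ ij.2 ∉ S}, ‖μ ij.1.1 - μ ij.1.2‖ with hΔdef
  set W : ℝ := ⨆ ij : Fin K × Fin K, w ij.1 / w ij.2 with hWdef
  set Ex : ℝ := Real.exp (-Real.exp (-2 * t) * Δ ^ 2 / (8 * lamhi)) with hExdef
  have hlamhi0 : (0:ℝ) < lamhi := lt_of_lt_of_le one_pos hhi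
  have hΔnn : 0 ≤ Δ := by
    rw [hΔdef]
    exact le_ciInf (f := fun ij : {ij : Fin K × Fin K // ij.1 ∈ S ∧ ij.2 ∉ S} =>
      ‖μ ij.1.1 - μ ij.1.2‖) fun ij => norm_nonneg _
  have hWle : ∀ a b : Fin K, w a / w b ≤ W := by
    intro a b
    rw [hWdef]
    exact le_ciSup (f := fun ij : Fin K × Fin K => w ij.1 / w ij.2)
      (Set.Finite.bddAbove
        (Set.finite_range fun ij : Fin K × Fin K => w ij.1 / w ij.2)) (a, b)
  have hW1 : (1 : ℝ) ≤ W := by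
    have h := hWle j j
    rwa [div_self (hw j).ne'] at h
  have hW0 : (0 : ℝ) ≤ W := le_trans zero_le_one hW1
  have hExpos : 0 < Ex := Real.exp_pos _
  have hcov := fun i => Gauss12.covAt_props hlo hlo1 hhi (hsymm i) (hform i) ht
  have hPD : ∀ i, (covAt (Sig i) t).PosDef := fun i => (hcov i).1
  have hppos : ∀ (i : Fin K) (x : EuclideanSpace ℝ (Fin d)),
      0 < gaussPDF (Real.exp (-t) • μ i) (covAt (Sig i) t) x :=
    fun i x => Gauss12.gaussPDF_pos (hPD i).det_pos _ _
  -- squared distance between time-t means and its lower bound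
  have hnvge : ∀ i : Fin K, i ∉ S → Real.exp (-2 * t) * Δ ^ 2 ≤ (∑ k, (Real.exp (-t) * μ i k - Real.exp (-t) * μ j k) ^ 2) := by
    intro i hi
    have hnveq : (∑ k, (Real.exp (-t) * μ i k - Real.exp (-t) * μ j k) ^ 2) = Real.exp (-2 * t) * ∑ k, (μ i k - μ j k) ^ 2 := by
      rw [Finset.mul_sum]
      refine Finset.sum_congr rfl fun k _ => ?_
      have he : Real.exp (-2 * t) = Real.exp (-t) * Real.exp (-t) := by
        rw [← Real.exp_add]; ring_nf
      rw [he]; ring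
    rw [hnveq]
    have h1 : Δ ≤ ‖μ j - μ i‖ := by
      rw [hΔdef]
      exact ciInf_le (f := fun ij : {ij : Fin K × Fin K // ij.1 ∈ S ∧ ij.2 ∉ S} =>
          ‖μ ij.1.1 - μ ij.1.2‖)
        (Set.Finite.bddBelow (Set.finite_range _)) ⟨(j, i), hj, hi⟩
    have h2 : ‖μ j - μ i‖ ^ 2 = ∑ k, (μ i k - μ j k) ^ 2 := by
      rw [EuclideanSpace.norm_eq, Real.sq_sqrt (Finset.sum_nonneg fun k _ => sq_nonneg _)]
      refine Finset.sum_congr rfl fun k _ => ?_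
      have h3 : (μ j - μ i) k = μ j k - μ i k := rfl
      rw [h3, Real.norm_eq_abs, sq_abs]
      ring
    have h3 : Δ ^ 2 ≤ ∑ k, (μ i k - μ j k) ^ 2 := by
      rw [← h2]
      exact pow_le_pow_left₀ hΔnn h1 2
    exact mul_le_mul_of_nonneg_left h3 (Real.exp_pos _).le
  have hnvnn : ∀ i : Fin K, (0:ℝ) ≤ (∑ k, (Real.exp (-t) * μ i k - Real.exp (-t) * μ j k) ^ 2) :=
    fun i => Finset.sum_nonneg fun k _ => sq_nonneg _
  have hEbound : ∀ i : Fin K, i ∉ S →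
      -((∑ k, (Real.exp (-t) * μ i k - Real.exp (-t) * μ j k) ^ 2)) / (8 * lamhi) ≤ -Real.exp (-2 * t) * Δ ^ 2 / (8 * lamhi) := by
    intro i hi
    have h8 : (0:ℝ) < 8 * lamhi := by positivity
    rw [div_le_div_iff₀ h8 h8]
    nlinarith [mul_le_mul_of_nonneg_right (hnvge i hi) h8.le]
  -- the moment generating function facts, restated in beta-reduced form
  have hmgf1 : ∀ i : Fin K,
      Integrable (fun x : EuclideanSpace ℝ (Fin d) =>
        gaussPDF (Real.exp (-t) • μ i) (covAt (Sig i) t) x * rexp ((fun k => -(1 / (2 * lamhi)) * (Real.exp (-t) * μ i k - Real.exp (-t) * μ j k)) ⬝ᵥ fun k => x k - ((Real.exp (-t) * μ i k + Real.exp (-t) * μ j k) / 2))) ∧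
      ∫ x : EuclideanSpace ℝ (Fin d),
        gaussPDF (Real.exp (-t) • μ i) (covAt (Sig i) t) x * rexp ((fun k => -(1 / (2 * lamhi)) * (Real.exp (-t) * μ i k - Real.exp (-t) * μ j k)) ⬝ᵥ fun k => x k - ((Real.exp (-t) * μ i k + Real.exp (-t) * μ j k) / 2))
        = rexp ((fun k => -(1 / (2 * lamhi)) * (Real.exp (-t) * μ i k - Real.exp (-t) * μ j k)) ⬝ᵥ covAt (Sig i) t *ᵥ (fun k => -(1 / (2 * lamhi)) * (Real.exp (-t) * μ i k - Real.exp (-t) * μ j k)) / 2 + ((fun k => -(1 / (2 * lamhi)) * (Real.exp (-t) * μ i k - Real.exp (-t) * μ j k)) ⬝ᵥ fun k => Real.exp (-t) * μ i k - ((Real.exp (-t) * μ i k + Real.exp (-t) * μ j k) / 2))) :=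
    fun i => Gauss12.mgf_key (hPD i) (hcov i).2.1 (Real.exp (-t) • μ i)
      (fun k => ((Real.exp (-t) * μ i k + Real.exp (-t) * μ j k) / 2)) (fun k => -(1 / (2 * lamhi)) * (Real.exp (-t) * μ i k - Real.exp (-t) * μ j k))
  have hmgf2 : ∀ i : Fin K,
      Integrable (fun x : EuclideanSpace ℝ (Fin d) =>
        gaussPDF (Real.exp (-t) • μ j) (covAt (Sig j) t) x * rexp ((fun k => 1 / (2 * lamhi) * (Real.exp (-t) * μ i k - Real.exp (-t) * μ j k)) ⬝ᵥ fun k => x k - ((Real.exp (-t) * μ i k + Real.exp (-t) * μ j k) / 2))) ∧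
      ∫ x : EuclideanSpace ℝ (Fin d),
        gaussPDF (Real.exp (-t) • μ j) (covAt (Sig j) t) x * rexp ((fun k => 1 / (2 * lamhi) * (Real.exp (-t) * μ i k - Real.exp (-t) * μ j k)) ⬝ᵥ fun k => x k - ((Real.exp (-t) * μ i k + Real.exp (-t) * μ j k) / 2))
        = rexp ((fun k => 1 / (2 * lamhi) * (Real.exp (-t) * μ i k - Real.exp (-t) * μ j k)) ⬝ᵥ covAt (Sig j) t *ᵥ (fun k => 1 / (2 * lamhi) * (Real.exp (-t) * μ i k - Real.exp (-t) * μ j k)) / 2 + ((fun k => 1 / (2 * lamhi) * (Real.exp (-t) * μ i k - Real.exp (-t) * μ j k)) ⬝ᵥ fun k => Real.exp (-t) * μ j k - ((Real.exp (-t) * μ i k + Real.exp (-t) * μ j k) / 2))) :=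
    fun i => Gauss12.mgf_key (hPD j) (hcov j).2.1 (Real.exp (-t) • μ j)
      (fun k => ((Real.exp (-t) * μ i k + Real.exp (-t) * μ j k) / 2)) (fun k => 1 / (2 * lamhi) * (Real.exp (-t) * μ i k - Real.exp (-t) * μ j k))
  -- exponent bounds
  have hexp1 : ∀ i : Fin K, i ∉ S → rexp ((fun k => -(1 / (2 * lamhi)) * (Real.exp (-t) * μ i k - Real.exp (-t) * μ j k)) ⬝ᵥ covAt (Sig i) t *ᵥ (fun k => -(1 / (2 * lamhi)) * (Real.exp (-t) * μ i k - Real.exp (-t) * μ j k)) / 2 + ((fun k => -(1 / (2 * lamhi)) * (Real.exp (-t) * μ i k - Real.exp (-t) * μ j k)) ⬝ᵥ fun k => Real.exp (-t) * μ i k - ((Real.exp (-t) * μ i k + Real.exp (-t) * μ j k) / 2))) ≤ Ex := by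
    intro i hi
    rw [hExdef]
    apply Real.exp_le_exp.mpr
    have hq : (fun k => -(1 / (2 * lamhi)) * (Real.exp (-t) * μ i k - Real.exp (-t) * μ j k)) ⬝ᵥ covAt (Sig i) t *ᵥ (fun k => -(1 / (2 * lamhi)) * (Real.exp (-t) * μ i k - Real.exp (-t) * μ j k))
        ≤ (1 / (2 * lamhi)) ^ 2 * (lamhi * (∑ k, (Real.exp (-t) * μ i k - Real.exp (-t) * μ j k) ^ 2)) := by
      calc (fun k => -(1 / (2 * lamhi)) * (Real.exp (-t) * μ i k - Real.exp (-t) * μ j k)) ⬝ᵥ covAt (Sig i) t *ᵥ (fun k => -(1 / (2 * lamhi)) * (Real.exp (-t) * μ i k - Real.exp (-t) * μ j k))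
          ≤ (-(1 / (2 * lamhi))) ^ 2 * (lamhi * (∑ k, (Real.exp (-t) * μ i k - Real.exp (-t) * μ j k) ^ 2)) :=
            Gauss12.quad_scaled_le' (v := (fun k => Real.exp (-t) * μ i k - Real.exp (-t) * μ j k)) (fun k => rfl) (hcov i).2.2
        _ = (1 / (2 * lamhi)) ^ 2 * (lamhi * (∑ k, (Real.exp (-t) * μ i k - Real.exp (-t) * μ j k) ^ 2)) := by ring
    have hw2 : ((fun k => -(1 / (2 * lamhi)) * (Real.exp (-t) * μ i k - Real.exp (-t) * μ j k)) ⬝ᵥ fun k => Real.exp (-t) * μ i k - ((Real.exp (-t) * μ i k + Real.exp (-t) * μ j k) / 2))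
        = -(1 / (2 * lamhi) / 2) * (∑ k, (Real.exp (-t) * μ i k - Real.exp (-t) * μ j k) ^ 2) := by
      calc ((fun k => -(1 / (2 * lamhi)) * (Real.exp (-t) * μ i k - Real.exp (-t) * μ j k)) ⬝ᵥ fun k => Real.exp (-t) * μ i k - ((Real.exp (-t) * μ i k + Real.exp (-t) * μ j k) / 2))
          = (-(1 / (2 * lamhi)) * (1/2)) * (∑ k, (Real.exp (-t) * μ i k - Real.exp (-t) * μ j k) ^ 2) :=
            Gauss12.dot_scaled' (v := (fun k => Real.exp (-t) * μ i k - Real.exp (-t) * μ j k)) (fun k => rfl) (fun k => by ring)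
        _ = -(1 / (2 * lamhi) / 2) * (∑ k, (Real.exp (-t) * μ i k - Real.exp (-t) * μ j k) ^ 2) := by ring
    exact le_trans (Gauss12.expo_le hlamhi0 (hnvnn i) hq hw2) (hEbound i hi)
  have hexp2 : ∀ i : Fin K, i ∉ S → rexp ((fun k => 1 / (2 * lamhi) * (Real.exp (-t) * μ i k - Real.exp (-t) * μ j k)) ⬝ᵥ covAt (Sig j) t *ᵥ (fun k => 1 / (2 * lamhi) * (Real.exp (-t) * μ i k - Real.exp (-t) * μ j k)) / 2 + ((fun k => 1 / (2 * lamhi) * (Real.exp (-t) * μ i k - Real.exp (-t) * μ j k)) ⬝ᵥ fun k => Real.exp (-t) * μ j k - ((Real.exp (-t) * μ i k + Real.exp (-t) * μ j k) / 2))) ≤ Ex := by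
    intro i hi
    rw [hExdef]
    apply Real.exp_le_exp.mpr
    have hq : (fun k => 1 / (2 * lamhi) * (Real.exp (-t) * μ i k - Real.exp (-t) * μ j k)) ⬝ᵥ covAt (Sig j) t *ᵥ (fun k => 1 / (2 * lamhi) * (Real.exp (-t) * μ i k - Real.exp (-t) * μ j k))
        ≤ (1 / (2 * lamhi)) ^ 2 * (lamhi * (∑ k, (Real.exp (-t) * μ i k - Real.exp (-t) * μ j k) ^ 2)) :=
      Gauss12.quad_scaled_le' (v := (fun k => Real.exp (-t) * μ i k - Real.exp (-t) * μ j k)) (fun k => rfl) (hcov j).2.2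
    have hw2 : ((fun k => 1 / (2 * lamhi) * (Real.exp (-t) * μ i k - Real.exp (-t) * μ j k)) ⬝ᵥ fun k => Real.exp (-t) * μ j k - ((Real.exp (-t) * μ i k + Real.exp (-t) * μ j k) / 2))
        = -(1 / (2 * lamhi) / 2) * (∑ k, (Real.exp (-t) * μ i k - Real.exp (-t) * μ j k) ^ 2) := by
      calc ((fun k => 1 / (2 * lamhi) * (Real.exp (-t) * μ i k - Real.exp (-t) * μ j k)) ⬝ᵥ fun k => Real.exp (-t) * μ j k - ((Real.exp (-t) * μ i k + Real.exp (-t) * μ j k) / 2))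
          = ((1 / (2 * lamhi)) * (-(1/2))) * (∑ k, (Real.exp (-t) * μ i k - Real.exp (-t) * μ j k) ^ 2) :=
            Gauss12.dot_scaled' (v := (fun k => Real.exp (-t) * μ i k - Real.exp (-t) * μ j k)) (fun k => rfl) (fun k => by ring)
        _ = -(1 / (2 * lamhi) / 2) * (∑ k, (Real.exp (-t) * μ i k - Real.exp (-t) * μ j k) ^ 2) := by ring
    exact le_trans (Gauss12.expo_le hlamhi0 (hnvnn i) hq hw2) (hEbound i hi)
  -- the dominating function
  set G : EuclideanSpace ℝ (Fin d) → ℝ := fun x => ∑ i ∈ Sᶜ,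
    ((w i / w j) * (gaussPDF (Real.exp (-t) • μ i) (covAt (Sig i) t) x * rexp ((fun k => -(1 / (2 * lamhi)) * (Real.exp (-t) * μ i k - Real.exp (-t) * μ j k)) ⬝ᵥ fun k => x k - ((Real.exp (-t) * μ i k + Real.exp (-t) * μ j k) / 2))) +
      gaussPDF (Real.exp (-t) • μ j) (covAt (Sig j) t) x * rexp ((fun k => 1 / (2 * lamhi) * (Real.exp (-t) * μ i k - Real.exp (-t) * μ j k)) ⬝ᵥ fun k => x k - ((Real.exp (-t) * μ i k + Real.exp (-t) * μ j k) / 2))) with hGdef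
  have hGint : Integrable G := by
    rw [hGdef]
    exact integrable_finset_sum _ fun i _ => (((hmgf1 i).1).const_mul _).add (hmgf2 i).1
  have hpt : ∀ x : EuclideanSpace ℝ (Fin d),
      ((∑ i ∈ Sᶜ, w i * gaussPDF (Real.exp (-t) • μ i) (covAt (Sig i) t) x) /
          (∑ i : Fin K, w i * gaussPDF (Real.exp (-t) • μ i) (covAt (Sig i) t) x)) ^ 4 *
        gaussPDF (Real.exp (-t) • μ j) (covAt (Sig j) t) x ≤ G x := by
    intro x
    refine le_trans (Gauss12.ratio_le
      (fun i => gaussPDF (Real.exp (-t) • μ i) (covAt (Sig i) t) x)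
      w (fun i => hppos i x) hw S j hj) ?_
    rw [hGdef]
    refine Finset.sum_le_sum fun i _ => ?_
    have hDneg : ((fun k => -(1 / (2 * lamhi)) * (Real.exp (-t) * μ i k - Real.exp (-t) * μ j k)) ⬝ᵥ fun k => x k - ((Real.exp (-t) * μ i k + Real.exp (-t) * μ j k) / 2))
        = -((fun k => 1 / (2 * lamhi) * (Real.exp (-t) * μ i k - Real.exp (-t) * μ j k)) ⬝ᵥ fun k => x k - ((Real.exp (-t) * μ i k + Real.exp (-t) * μ j k) / 2)) :=
      Gauss12.dot_neg' (fun k => by ring)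
    rcases le_total 0 ((fun k => 1 / (2 * lamhi) * (Real.exp (-t) * μ i k - Real.exp (-t) * μ j k)) ⬝ᵥ fun k => x k - ((Real.exp (-t) * μ i k + Real.exp (-t) * μ j k) / 2)) with hD | hD
    · have hex : (1:ℝ) ≤ rexp ((fun k => 1 / (2 * lamhi) * (Real.exp (-t) * μ i k - Real.exp (-t) * μ j k)) ⬝ᵥ fun k => x k - ((Real.exp (-t) * μ i k + Real.exp (-t) * μ j k) / 2)) := by
        exact Real.one_le_exp hD
      calc min ((w i / w j) * gaussPDF (Real.exp (-t) • μ i) (covAt (Sig i) t) x) (gaussPDF (Real.exp (-t) • μ j) (covAt (Sig j) t) x)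
          ≤ gaussPDF (Real.exp (-t) • μ j) (covAt (Sig j) t) x := min_le_right _ _
        _ ≤ gaussPDF (Real.exp (-t) • μ j) (covAt (Sig j) t) x * rexp ((fun k => 1 / (2 * lamhi) * (Real.exp (-t) * μ i k - Real.exp (-t) * μ j k)) ⬝ᵥ fun k => x k - ((Real.exp (-t) * μ i k + Real.exp (-t) * μ j k) / 2)) :=
            le_mul_of_one_le_right (hppos j x).le hex
        _ ≤ (w i / w j) * (gaussPDF (Real.exp (-t) • μ i) (covAt (Sig i) t) x * rexp ((fun k => -(1 / (2 * lamhi)) * (Real.exp (-t) * μ i k - Real.exp (-t) * μ j k)) ⬝ᵥ fun k => x k - ((Real.exp (-t) * μ i k + Real.exp (-t) * μ j k) / 2))) +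
      gaussPDF (Real.exp (-t) • μ j) (covAt (Sig j) t) x * rexp ((fun k => 1 / (2 * lamhi) * (Real.exp (-t) * μ i k - Real.exp (-t) * μ j k)) ⬝ᵥ fun k => x k - ((Real.exp (-t) * μ i k + Real.exp (-t) * μ j k) / 2)) :=
            le_add_of_nonneg_left (mul_nonneg (div_nonneg (hw i).le (hw j).le)
              (mul_nonneg (hppos i x).le (Real.exp_pos _).le))
    · have hex : (1:ℝ) ≤ rexp ((fun k => -(1 / (2 * lamhi)) * (Real.exp (-t) * μ i k - Real.exp (-t) * μ j k)) ⬝ᵥ fun k => x k - ((Real.exp (-t) * μ i k + Real.exp (-t) * μ j k) / 2)) := by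
        rw [hDneg]
        exact Real.one_le_exp (by linarith)
      calc min ((w i / w j) * gaussPDF (Real.exp (-t) • μ i) (covAt (Sig i) t) x) (gaussPDF (Real.exp (-t) • μ j) (covAt (Sig j) t) x)
          ≤ (w i / w j) * gaussPDF (Real.exp (-t) • μ i) (covAt (Sig i) t) x := min_le_left _ _
        _ ≤ (w i / w j) * (gaussPDF (Real.exp (-t) • μ i) (covAt (Sig i) t) x * rexp ((fun k => -(1 / (2 * lamhi)) * (Real.exp (-t) * μ i k - Real.exp (-t) * μ j k)) ⬝ᵥ fun k => x k - ((Real.exp (-t) * μ i k + Real.exp (-t) * μ j k) / 2))) := by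
            refine mul_le_mul_of_nonneg_left ?_ (div_nonneg (hw i).le (hw j).le)
            exact le_mul_of_one_le_right (hppos i x).le hex
        _ ≤ (w i / w j) * (gaussPDF (Real.exp (-t) • μ i) (covAt (Sig i) t) x * rexp ((fun k => -(1 / (2 * lamhi)) * (Real.exp (-t) * μ i k - Real.exp (-t) * μ j k)) ⬝ᵥ fun k => x k - ((Real.exp (-t) * μ i k + Real.exp (-t) * μ j k) / 2))) +
      gaussPDF (Real.exp (-t) • μ j) (covAt (Sig j) t) x * rexp ((fun k => 1 / (2 * lamhi) * (Real.exp (-t) * μ i k - Real.exp (-t) * μ j k)) ⬝ᵥ fun k => x k - ((Real.exp (-t) * μ i k + Real.exp (-t) * μ j k) / 2)) :=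
            le_add_of_nonneg_right (mul_nonneg (hppos j x).le (Real.exp_pos _).le)
  refine le_trans (integral_mono_of_nonneg
    (Filter.Eventually.of_forall fun x => mul_nonneg (by positivity) (hppos j x).le)
    hGint (Filter.Eventually.of_forall hpt)) ?_
  have hterm : ∀ i ∈ Sᶜ,
      (∫ x : EuclideanSpace ℝ (Fin d), (w i / w j) * (gaussPDF (Real.exp (-t) • μ i) (covAt (Sig i) t) x * rexp ((fun k => -(1 / (2 * lamhi)) * (Real.exp (-t) * μ i k - Real.exp (-t) * μ j k)) ⬝ᵥ fun k => x k - ((Real.exp (-t) * μ i k + Real.exp (-t) * μ j k) / 2))) +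
      gaussPDF (Real.exp (-t) • μ j) (covAt (Sig j) t) x * rexp ((fun k => 1 / (2 * lamhi) * (Real.exp (-t) * μ i k - Real.exp (-t) * μ j k)) ⬝ᵥ fun k => x k - ((Real.exp (-t) * μ i k + Real.exp (-t) * μ j k) / 2))) ≤ W * Ex + Ex := by
    intro i hi
    have hi' : i ∉ S := Finset.mem_compl.mp hi
    rw [integral_add (((hmgf1 i).1).const_mul _) (hmgf2 i).1,
      MeasureTheory.integral_const_mul, (hmgf1 i).2, (hmgf2 i).2]
    exact add_le_add
      (mul_le_mul (hWle i j) (hexp1 i hi') (Real.exp_pos _).le hW0)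
      (hexp2 i hi')
  calc ∫ x, G x
      = ∑ i ∈ Sᶜ, ∫ x : EuclideanSpace ℝ (Fin d), (w i / w j) * (gaussPDF (Real.exp (-t) • μ i) (covAt (Sig i) t) x * rexp ((fun k => -(1 / (2 * lamhi)) * (Real.exp (-t) * μ i k - Real.exp (-t) * μ j k)) ⬝ᵥ fun k => x k - ((Real.exp (-t) * μ i k + Real.exp (-t) * μ j k) / 2))) +
      gaussPDF (Real.exp (-t) • μ j) (covAt (Sig j) t) x * rexp ((fun k => 1 / (2 * lamhi) * (Real.exp (-t) * μ i k - Real.exp (-t) * μ j k)) ⬝ᵥ fun k => x k - ((Real.exp (-t) * μ i k + Real.exp (-t) * μ j k) / 2)) := by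
        rw [hGdef]
        exact integral_finset_sum _ fun i _ => (((hmgf1 i).1).const_mul _).add (hmgf2 i).1
    _ ≤ ∑ _i ∈ Sᶜ, (W * Ex + Ex) := Finset.sum_le_sum hterm
    _ = (Sᶜ.card : ℝ) * (W * Ex + Ex) := by
        rw [Finset.sum_const, nsmul_eq_mul]
    _ ≤ (K : ℝ) * (W * Ex + Ex) := by
        refine mul_le_mul_of_nonneg_right ?_
          (add_nonneg (mul_nonneg hW0 hExpos.le) hExpos.le)
        have h1 := Finset.card_le_univ (Sᶜ : Finset (Fin K))
        have h2 : (Finset.univ : Finset (Fin K)).card = K := by simp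
        exact_mod_cast le_trans h1 (le_of_eq h2)
    _ ≤ (K : ℝ) * (2 * W * Ex) := by
        refine mul_le_mul_of_nonneg_left ?_ (Nat.cast_nonneg K)
        nlinarith [mul_nonneg (sub_nonneg.mpr hW1) hExpos.le]
    _ = 2 * (K : ℝ) * W * Ex := by ring
end
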